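/- arXiv:1604.08265 — 2 statements merged into one kernel-verified Lean document; each statement's English description precedes it below -/
import Mathlib

section
/- Let $0 \le a < 1$, $b > 0$ and $c > 0$. Then there exists a constant $C > 0$, independent of $t$, such that for all $t \ge 0$, $\int_0^t e^{-c(t-s)} (t-s)^{-a} (1+s)^{-b} \, ds \le C (1+t)^{-b}$. -/
open Real MeasureTheory Set

/-! Substituting `u = t - s`, the weight `(1 + t - u)^(-b)` is at most `(1 + t)^(-b) (1 + u)^b`
because `1 + t ≤ (1 + t - u)(1 + u)`. The polynomial factor `(1 + u)^b` is absorbed by half of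
the exponential decay `e^{-cu}`, so the integral is bounded by `(1 + t)^(-b)` times a constant
multiple of `∫₀^∞ u^(-a) e^{-cu/2} du = (2/c)^(1-a) Γ(1 - a)`, which is finite since `a < 1`. -/

theorem intervalIntegral.integral_mono_on_of_nonneg {f g : ℝ → ℝ} {a b : ℝ} (hab : a ≤ b)
    (hg : IntervalIntegrable g volume a b) (hf : ∀ x ∈ Icc a b, 0 ≤ f x)
    (h : ∀ x ∈ Icc a b, f x ≤ g x) : ∫ x in a..b, f x ≤ ∫ x in a..b, g x := by
  rw [intervalIntegral.integral_of_le hab, intervalIntegral.integral_of_le hab]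
  exact integral_mono_of_nonneg
    (ae_restrict_of_forall_mem measurableSet_Ioc fun x hx => hf x (Ioc_subset_Icc_self hx)) hg.1
    (ae_restrict_of_forall_mem measurableSet_Ioc fun x hx => h x (Ioc_subset_Icc_self hx))

theorem intervalIntegral.integral_comp_sub_mul_swap (f g : ℝ → ℝ) (t : ℝ) :
    ∫ s in (0 : ℝ)..t, f (t - s) * g s = ∫ u in (0 : ℝ)..t, f u * g (t - u) := by
  simpa using intervalIntegral.integral_comp_sub_left (fun u => f u * g (t - u)) t (a := 0) (b := t)

theorem one_add_le_inv_mul_exp_mul {ε : ℝ} (hε : 0 < ε) (hε1 : ε ≤ 1) (u : ℝ) :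
    1 + u ≤ ε⁻¹ * exp (ε * u) := by
  rw [le_inv_mul_iff₀ hε]
  nlinarith [add_one_le_exp (ε * u)]

theorem exists_one_add_rpow_le_mul_exp {b δ : ℝ} (hb : 0 ≤ b) (hδ : 0 < δ) :
    ∃ K > 0, ∀ u : ℝ, 0 ≤ u → (1 + u) ^ b ≤ K * exp (δ * u) := by
  set ε := min 1 (δ / (b + 1))
  have hε : 0 < ε := lt_min one_pos (by positivity)
  have hεb : ε * b ≤ δ := by
    have : ε * (b + 1) ≤ δ := (le_div_iff₀ (by positivity)).1 (min_le_right _ _)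
    nlinarith
  refine ⟨ε ^ (-b), rpow_pos_of_pos hε _, fun u hu => ?_⟩
  calc (1 + u) ^ b ≤ (ε⁻¹ * exp (ε * u)) ^ b :=
        rpow_le_rpow (by positivity) (one_add_le_inv_mul_exp_mul hε (min_le_left _ _) u) hb
    _ = ε ^ (-b) * exp (ε * b * u) := by
        rw [mul_rpow (by positivity) (exp_pos _).le, inv_rpow hε.le, ← rpow_neg hε.le,
          ← exp_mul]
        ring_nf
    _ ≤ ε ^ (-b) * exp (δ * u) := by gcongr

theorem one_add_sub_rpow_neg_le {b t u : ℝ} (hb : 0 ≤ b) (hu : 0 ≤ u) (hut : u ≤ t) :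
    (1 + (t - u)) ^ (-b) ≤ (1 + t) ^ (-b) * (1 + u) ^ b := by
  have hu1 : (0 : ℝ) < 1 + u := by linarith
  have htu1 : (0 : ℝ) < 1 + (t - u) := by linarith
  calc (1 + (t - u)) ^ (-b) = ((1 + (t - u)) * (1 + u)) ^ (-b) * (1 + u) ^ b := by
        rw [mul_rpow htu1.le hu1.le, rpow_neg hu1.le, mul_assoc,
          inv_mul_cancel₀ (rpow_pos_of_pos hu1 _).ne', mul_one]
    _ ≤ (1 + t) ^ (-b) * (1 + u) ^ b := by
        refine mul_le_mul_of_nonneg_right ?_ (rpow_pos_of_pos hu1 _).le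
        exact rpow_le_rpow_of_nonpos (by linarith) (by nlinarith) (by linarith)

theorem integrableOn_rpow_neg_mul_exp_neg_mul {a δ : ℝ} (ha : a < 1) (hδ : 0 < δ) :
    IntegrableOn (fun u : ℝ => u ^ (-a) * exp (-(δ * u))) (Ioi 0) := by
  simpa [rpow_one, neg_mul] using
    integrableOn_rpow_mul_exp_neg_mul_rpow (s := -a) (p := 1) (by linarith) one_pos hδ

theorem intervalIntegral_rpow_neg_mul_exp_neg_mul_le {a δ t : ℝ} (ha : a < 1) (hδ : 0 < δ)
    (ht : 0 ≤ t) :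
    ∫ u in (0 : ℝ)..t, u ^ (-a) * exp (-(δ * u)) ≤ (1 / δ) ^ (1 - a) * Gamma (1 - a) := by
  rw [intervalIntegral.integral_of_le ht,
    ← integral_rpow_mul_exp_neg_mul_Ioi (by linarith : 0 < 1 - a) hδ, sub_sub_cancel_left]
  exact setIntegral_mono_set (integrableOn_rpow_neg_mul_exp_neg_mul ha hδ)
    (ae_restrict_of_forall_mem measurableSet_Ioi fun u hu =>
      mul_nonneg (rpow_nonneg (le_of_lt hu) _) (exp_pos _).le)
    (Ioc_subset_Ioi_self).eventuallyLE

theorem exp_neg_mul_mul_one_add_sub_rpow_neg_le {b c K t u : ℝ} (hb : 0 ≤ b)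
    (hpoly : (1 + u) ^ b ≤ K * exp (c / 2 * u)) (hu : 0 ≤ u) (hut : u ≤ t) :
    exp (-c * u) * (1 + (t - u)) ^ (-b) ≤ K * (1 + t) ^ (-b) * exp (-(c / 2 * u)) :=
  calc exp (-c * u) * (1 + (t - u)) ^ (-b)
      ≤ exp (-c * u) * ((1 + t) ^ (-b) * (K * exp (c / 2 * u))) := by
        have : 0 < 1 + t := by linarith
        gcongr
        exact (one_add_sub_rpow_neg_le hb hu hut).trans (by gcongr)
    _ = K * (1 + t) ^ (-b) * exp (-(c / 2 * u)) := by
        rw [mul_left_comm, mul_left_comm (exp _), ← exp_add]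
        ring_nf

theorem stmt3_general (a b c : ℝ) (ha1 : a < 1) (hb : 0 < b) (hc : 0 < c) :
    ∃ C > (0:ℝ), ∀ t : ℝ, 0 ≤ t →
      ∫ s in (0:ℝ)..t, Real.exp (-c * (t - s)) * (t - s) ^ (-a) * (1 + s) ^ (-b)
        ≤ C * (1 + t) ^ (-b) := by
  obtain ⟨K, hK, hpoly⟩ := exists_one_add_rpow_le_mul_exp hb.le (half_pos hc)
  refine ⟨K * ((1 / (c / 2)) ^ (1 - a) * Gamma (1 - a)), by positivity, fun t ht => ?_⟩
  have hkernel : IntervalIntegrable (fun u : ℝ => u ^ (-a) * exp (-(c / 2 * u))) volume 0 t :=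
    (intervalIntegrable_iff_integrableOn_Ioc_of_le ht).2
      ((integrableOn_rpow_neg_mul_exp_neg_mul ha1 (half_pos hc)).mono_set Ioc_subset_Ioi_self)
  calc _ = ∫ u in (0:ℝ)..t, exp (-c * u) * u ^ (-a) * (1 + (t - u)) ^ (-b) :=
        intervalIntegral.integral_comp_sub_mul_swap (fun u => exp (-c * u) * u ^ (-a))
          (fun s => (1 + s) ^ (-b)) t
    _ ≤ ∫ u in (0:ℝ)..t, K * (1 + t) ^ (-b) * (u ^ (-a) * exp (-(c / 2 * u))) := by
        refine intervalIntegral.integral_mono_on_of_nonneg ht (hkernel.const_mul _)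
          (fun u ⟨hu, hut⟩ => ?_) (fun u ⟨hu, hut⟩ => ?_)
        · have : 0 < 1 + (t - u) := by linarith
          positivity
        · have hweight := exp_neg_mul_mul_one_add_sub_rpow_neg_le hb.le (hpoly u hu) hu hut
          calc _ = u ^ (-a) * (exp (-c * u) * (1 + (t - u)) ^ (-b)) := by ring
            _ ≤ u ^ (-a) * (K * (1 + t) ^ (-b) * exp (-(c / 2 * u))) := by gcongr
            _ = _ := by ring
    _ ≤ K * (1 + t) ^ (-b) * ((1 / (c / 2)) ^ (1 - a) * Gamma (1 - a)) := by
        rw [intervalIntegral.integral_const_mul]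
        gcongr
        exact intervalIntegral_rpow_neg_mul_exp_neg_mul_le ha1 (half_pos hc) ht
    _ = K * ((1 / (c / 2)) ^ (1 - a) * Gamma (1 - a)) * (1 + t) ^ (-b) := by ring

theorem stmt3 (a b c : ℝ) (ha0 : 0 ≤ a) (ha1 : a < 1) (hb : 0 < b) (hc : 0 < c) :
    ∃ C > (0:ℝ), ∀ t : ℝ, 0 ≤ t →
      ∫ s in (0:ℝ)..t, Real.exp (-c * (t - s)) * (t - s) ^ (-a) * (1 + s) ^ (-b)
        ≤ C * (1 + t) ^ (-b) :=
  stmt3_general a b c ha1 hb hc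
end

section
/- For all $t \ge 0$ and all $\xi \in \mathbb{R}^n$ with $|\xi| \le 3/4$, one has the pointwise bound $\left| \mathcal{K}_0(t,\xi) - e^{-t|\xi|^2} \right| \le C\, |\xi|^2 e^{-(1+t)|\xi|^2}$ for some constant $C > 0$ independent of $t$ and $\xi$, where $\mathcal{K}_0(t,\xi) = \frac{e^{-t|\xi|^2} - |\xi|^2 e^{-t}}{1-|\xi|^2}$. -/
open Real

/-- Low-frequency approximation of `𝒦₀` by the heat multiplier: for `|ξ| ≤ 3/4`,
`|𝒦₀(t,ξ) - e^{-t|ξ|²}| ≤ C |ξ|² e^{-(1+t)|ξ|²}`. -/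
theorem stmt9 (n : ℕ) :
    ∃ C > (0:ℝ), ∀ (t : ℝ), 0 ≤ t → ∀ ξ : EuclideanSpace ℝ (Fin n), ‖ξ‖ ≤ 3/4 →
      |(Real.exp (-t * ‖ξ‖ ^ 2) - ‖ξ‖ ^ 2 * Real.exp (-t)) / (1 - ‖ξ‖ ^ 2)
          - Real.exp (-t * ‖ξ‖ ^ 2)|
        ≤ C * ‖ξ‖ ^ 2 * Real.exp (-(1 + t) * ‖ξ‖ ^ 2) := by
  refine ⟨16 / 7 * Real.exp 1, by positivity, fun t ht ξ hξ => ?_⟩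
  set r : ℝ := ‖ξ‖ ^ 2 with hr
  have hr0 : 0 ≤ r := by positivity
  have hr916 : r ≤ 9 / 16 := by
    have := sq_le_sq' (by linarith [norm_nonneg ξ] : -(3/4:ℝ) ≤ ‖ξ‖) hξ
    rw [show (9:ℝ)/16 = (3/4)^2 by norm_num]; simpa [hr] using this
  have h1r : (7:ℝ)/16 ≤ 1 - r := by linarith
  have h1r0 : (0:ℝ) < 1 - r := by linarith
  set A : ℝ := Real.exp (-t * r)
  set B : ℝ := Real.exp (-t)
  have hA0 : 0 < A := Real.exp_pos _
  have hBA : B ≤ A := by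
    apply Real.exp_le_exp.2
    nlinarith
  have hB0 : 0 < B := Real.exp_pos _
  have key : (A - r * B) / (1 - r) - A = r * (A - B) / (1 - r) := by
    field_simp
    ring
  rw [key, abs_div, abs_of_pos h1r0, abs_of_nonneg (by nlinarith : 0 ≤ r * (A - B))]
  have hAexp : A ≤ Real.exp 1 * Real.exp (-(1 + t) * r) := by
    rw [← Real.exp_add]
    apply Real.exp_le_exp.2
    nlinarith
  have hnum : r * (A - B) ≤ r * A := by nlinarith
  have hstep : r * (A - B) / (1 - r) ≤ 16 / 7 * (r * A) := by
    rw [div_le_iff₀ h1r0]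
    nlinarith [mul_nonneg (mul_nonneg hr0 hA0.le) (by linarith : (0:ℝ) ≤ 16/7*(1-r)-1)]
  calc r * (A - B) / (1 - r) ≤ 16 / 7 * (r * A) := hstep
    _ ≤ 16 / 7 * Real.exp 1 * r * Real.exp (-(1 + t) * r) := by nlinarith
end
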